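/- Let J(s) = Σ_{i=1}^M a_i s_i² − Σ_{i=1}^M b_i s_i^p + Σ_{i≠j} d_ij s_j^{α_ij} s_i^{β_ij} with a_i, b_i > 0, d_ij ≥ 0, d_ij = d_ji, α_ij, β_ij > 1, α_ij + β_ij = p > 2, α_ji = β_ij. If J has a critical point in (0,∞)^M, then it is unique and it is a global maximum of J on (0,∞)^M. -/

import Mathlib

/-!
Rescaling `t = s * u` turns `J` into a function of the same shape in `u`, with coefficients
`a_i s_i²`, `b_i s_i^p`, `d_ij s_j^α_ij s_i^β_ij`, and turns the critical point `s` into `1`.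
Criticality at `1` says `p b_i = 2 a_i + 2 Σ_j d_ij β_ij`. Substituting this into `p J(u)` and
symmetrising with `d_ij = d_ji`, `β_ji = α_ij` gives
`p J(u) = Σ a_i (p u_i² - 2 u_i^p) + Σ d_ij (p u_j^α_ij u_i^β_ij - α_ij u_j^p - β_ij u_i^p)`,
and by weighted AM-GM every bracket is maximal at `u = 1`.
For uniqueness, the same relation at a critical `u` reads
`a_i (u_i^(p-1) - u_i) = Σ_j d_ij β_ij u_i^(β_ij-1) (u_j^α_ij - u_i^α_ij)`.
Where `u` is largest the right side is `≤ 0`, forcing `u_i ≤ 1`; where `u` is smallest it is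
`≥ 0`, forcing `u_i ≥ 1`.
-/

open Finset

theorem Real.rpow_mul_rpow_le_of_add_eq {p α β x y : ℝ} (hp : 0 < p) (hα : 0 ≤ α) (hβ : 0 ≤ β)
    (hαβ : α + β = p) (hx : 0 ≤ x) (hy : 0 ≤ y) :
    p * (x ^ α * y ^ β) ≤ α * x ^ p + β * y ^ p := by
  have h := Real.geom_mean_le_arith_mean2_weighted (div_nonneg hα hp.le) (div_nonneg hβ hp.le)
    (Real.rpow_nonneg hx p) (Real.rpow_nonneg hy p) (by field_simp; linarith)
  rw [← Real.rpow_mul hx, ← Real.rpow_mul hy, mul_div_cancel₀ _ hp.ne',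
    mul_div_cancel₀ _ hp.ne'] at h
  calc p * (x ^ α * y ^ β) ≤ p * (α / p * x ^ p + β / p * y ^ p) := by gcongr
    _ = α * x ^ p + β * y ^ p := by field_simp

theorem Finset.sum_sum_filter_ne_comm {ι M : Type*} [Fintype ι] [DecidableEq ι]
    [AddCommMonoid M] (f : ι → ι → M) :
    ∑ i, ∑ j ∈ univ.filter (· ≠ i), f i j = ∑ i, ∑ j ∈ univ.filter (· ≠ i), f j i := by
  simp only [sum_filter]
  rw [sum_comm]
  exact sum_congr rfl fun i _ => sum_congr rfl fun j _ => by simp only [ne_comm]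

namespace CoupledEnergy

variable {ι : Type*} [Fintype ι] [DecidableEq ι]

noncomputable def energy (p : ℝ) (a b : ι → ℝ) (d α β : ι → ι → ℝ) (s : ι → ℝ) : ℝ :=
  ∑ i, a i * s i ^ (2 : ℝ) - ∑ i, b i * s i ^ p
    + ∑ i, ∑ j ∈ univ.filter (· ≠ i), d i j * s j ^ α i j * s i ^ β i j

noncomputable def partialEnergy (p : ℝ) (a b : ι → ℝ) (d α β : ι → ι → ℝ) (s : ι → ℝ) (i : ι) :
    ℝ :=
  2 * a i * s i - p * b i * s i ^ (p - 1)
    + 2 * ∑ j ∈ univ.filter (· ≠ i), d i j * β i j * s j ^ α i j * s i ^ (β i j - 1)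

variable {p : ℝ} {a b : ι → ℝ} {d α β : ι → ι → ℝ}

theorem energy_mul {s u : ι → ℝ} (hs : ∀ i, 0 ≤ s i) (hu : ∀ i, 0 ≤ u i) :
    energy p a b d α β (s * u)
      = energy p (fun i => a i * s i ^ (2 : ℝ)) (fun i => b i * s i ^ p)
          (fun i j => d i j * s j ^ α i j * s i ^ β i j) α β u := by
  simp only [energy, Pi.mul_apply, Real.mul_rpow (hs _) (hu _)]
  congr 1
  · congr 1 <;> exact sum_congr rfl fun i _ => by ring
  · exact sum_congr rfl fun i _ => sum_congr rfl fun j _ => by ring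

theorem partialEnergy_mul {s u : ι → ℝ} (hs : ∀ i, 0 < s i) (hu : ∀ i, 0 ≤ u i) (i : ι) :
    partialEnergy p (fun i => a i * s i ^ (2 : ℝ)) (fun i => b i * s i ^ p)
        (fun i j => d i j * s j ^ α i j * s i ^ β i j) α β u i
      = s i * partialEnergy p a b d α β (s * u) i := by
  have hsi : s i ≠ 0 := (hs i).ne'
  have hpow : ∀ q : ℝ, s i ^ q = s i * s i ^ (q - 1) := fun q => by
    rw [Real.rpow_sub_one hsi]; field_simp
  simp only [partialEnergy, Pi.mul_apply, Real.mul_rpow (hs _).le (hu _), mul_add, mul_sub,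
    mul_sum]
  rw [hpow 2, hpow p]
  congr 1
  · norm_num; ring
  · refine sum_congr rfl fun j _ => ?_
    rw [hpow (β i j)]
    ring

theorem partialEnergy_mul_eq_zero_iff {s u : ι → ℝ} (hs : ∀ i, 0 < s i) (hu : ∀ i, 0 ≤ u i) :
    (∀ i, partialEnergy p (fun i => a i * s i ^ (2 : ℝ)) (fun i => b i * s i ^ p)
        (fun i j => d i j * s j ^ α i j * s i ^ β i j) α β u i = 0)
      ↔ ∀ i, partialEnergy p a b d α β (s * u) i = 0 :=
  forall_congr' fun i => by rw [partialEnergy_mul hs hu, mul_eq_zero, or_iff_right (hs i).ne']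

theorem partialEnergy_one (i : ι) :
    partialEnergy p a b d α β 1 i
      = 2 * a i - p * b i + 2 * ∑ j ∈ univ.filter (· ≠ i), d i j * β i j := by
  simp [partialEnergy]

theorem mul_energy_eq (hdsymm : ∀ i j, i ≠ j → d i j = d j i)
    (hsymm : ∀ i j, i ≠ j → α j i = β i j) (h1 : ∀ i, partialEnergy p a b d α β 1 i = 0)
    (v : ι → ℝ) :
    p * energy p a b d α β v
      = ∑ i, a i * (p * v i ^ (2 : ℝ) - 2 * v i ^ p)
        + ∑ i, ∑ j ∈ univ.filter (· ≠ i),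
            d i j * (p * (v j ^ α i j * v i ^ β i j) - α i j * v j ^ p - β i j * v i ^ p) := by
  have hb : ∀ i, p * b i = 2 * a i + 2 * ∑ j ∈ univ.filter (· ≠ i), d i j * β i j := fun i => by
    have := h1 i
    rw [partialEnergy_one] at this
    linarith
  have hswap : ∑ i, ∑ j ∈ univ.filter (· ≠ i), d i j * α i j * v j ^ p
      = ∑ i, ∑ j ∈ univ.filter (· ≠ i), d i j * β i j * v i ^ p := by
    rw [Finset.sum_sum_filter_ne_comm]
    refine sum_congr rfl fun i _ => sum_congr rfl fun j hj => ?_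
    have hji : j ≠ i := (mem_filter.mp hj).2
    rw [hdsymm j i hji, hsymm i j hji.symm]
  have hbsum : p * ∑ i, b i * v i ^ p = ∑ i, 2 * a i * v i ^ p
      + ∑ i, ∑ j ∈ univ.filter (· ≠ i), d i j * α i j * v j ^ p
      + ∑ i, ∑ j ∈ univ.filter (· ≠ i), d i j * β i j * v i ^ p := by
    rw [hswap, add_assoc, ← two_mul, mul_sum, mul_sum, ← sum_add_distrib]
    refine sum_congr rfl fun i _ => ?_
    rw [← mul_assoc, hb]
    simp only [add_mul, mul_assoc, sum_mul]
  simp only [energy, mul_add, mul_sub, mul_sum, sum_sub_distrib] at hbsum ⊢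
  rw [hbsum]
  ring_nf

theorem energy_le_energy_one (hp : 2 < p) (ha : ∀ i, 0 ≤ a i) (hd : ∀ i j, i ≠ j → 0 ≤ d i j)
    (hdsymm : ∀ i j, i ≠ j → d i j = d j i)
    (hα : ∀ i j, i ≠ j → 0 ≤ α i j) (hβ : ∀ i j, i ≠ j → 0 ≤ β i j)
    (hαβp : ∀ i j, i ≠ j → α i j + β i j = p) (hsymm : ∀ i j, i ≠ j → α j i = β i j)
    (h1 : ∀ i, partialEnergy p a b d α β 1 i = 0) {u : ι → ℝ} (hu : ∀ i, 0 ≤ u i) :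
    energy p a b d α β u ≤ energy p a b d α β 1 := by
  have hp0 : 0 < p := by linarith
  refine le_of_mul_le_mul_left ?_ hp0
  rw [mul_energy_eq hdsymm hsymm h1, mul_energy_eq hdsymm hsymm h1]
  simp only [Pi.one_apply, Real.one_rpow, mul_one]
  refine add_le_add (sum_le_sum fun i _ => mul_le_mul_of_nonneg_left ?_ (ha i))
    (sum_le_sum fun i _ => sum_le_sum fun j hj => ?_)
  · have := Real.rpow_mul_rpow_le_of_add_eq (β := p - 2) hp0 zero_le_two (by linarith) (by ring)
      (hu i) zero_le_one
    simp only [Real.one_rpow, mul_one] at this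
    linarith
  · have hij : i ≠ j := (mem_filter.mp hj).2.symm
    have := Real.rpow_mul_rpow_le_of_add_eq hp0 (hα i j hij) (hβ i j hij) (hαβp i j hij)
      (hu j) (hu i)
    refine mul_le_mul_of_nonneg_left ?_ (hd i j hij)
    linarith [hαβp i j hij]

theorem mul_rpow_sub_one_sub_self_eq_sum {i : ι} (hαβp : ∀ j, i ≠ j → α i j + β i j = p)
    (h1 : partialEnergy p a b d α β 1 i = 0) {u : ι → ℝ} (hu : 0 < u i)
    (hcu : partialEnergy p a b d α β u i = 0) :
    a i * (u i ^ (p - 1) - u i)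
      = ∑ j ∈ univ.filter (· ≠ i),
          d i j * β i j * u i ^ (β i j - 1) * (u j ^ α i j - u i ^ α i j) := by
  have hsplit : ∑ j ∈ univ.filter (· ≠ i),
        d i j * β i j * u i ^ (β i j - 1) * (u j ^ α i j - u i ^ α i j)
      = ∑ j ∈ univ.filter (· ≠ i), d i j * β i j * u j ^ α i j * u i ^ (β i j - 1)
        - (∑ j ∈ univ.filter (· ≠ i), d i j * β i j) * u i ^ (p - 1) := by
    rw [sum_mul, ← sum_sub_distrib]
    refine sum_congr rfl fun j hj => ?_
    have hpow : u i ^ (β i j - 1) * u i ^ α i j = u i ^ (p - 1) := by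
      rw [← Real.rpow_add hu, ← hαβp j (mem_filter.mp hj).2.symm]
      ring_nf
    linear_combination -(d i j * β i j) * hpow
  rw [partialEnergy_one] at h1
  rw [partialEnergy] at hcu
  rw [hsplit]
  linear_combination (u i ^ (p - 1) * h1 - hcu) / 2

theorem le_one_of_forall_le {i : ι} {u : ι → ℝ} (hp : 2 < p) (ha : 0 < a i)
    (hd : ∀ j, i ≠ j → 0 ≤ d i j) (hα : ∀ j, i ≠ j → 0 ≤ α i j) (hβ : ∀ j, i ≠ j → 0 ≤ β i j)
    (hαβp : ∀ j, i ≠ j → α i j + β i j = p) (h1 : partialEnergy p a b d α β 1 i = 0)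
    (hu : ∀ j, 0 < u j) (hcu : partialEnergy p a b d α β u i = 0) (hmax : ∀ j, u j ≤ u i) :
    u i ≤ 1 := by
  by_contra! hgt
  have hlt : u i < u i ^ (p - 1) := Real.self_lt_rpow_of_one_lt hgt (by linarith)
  have hsum : ∑ j ∈ univ.filter (· ≠ i),
      d i j * β i j * u i ^ (β i j - 1) * (u j ^ α i j - u i ^ α i j) ≤ 0 := by
    refine sum_nonpos fun j hj => ?_
    have hij : i ≠ j := (mem_filter.mp hj).2.symm
    have hcoef : 0 ≤ d i j * β i j * u i ^ (β i j - 1) :=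
      mul_nonneg (mul_nonneg (hd j hij) (hβ j hij)) (Real.rpow_nonneg (hu i).le _)
    exact mul_nonpos_of_nonneg_of_nonpos hcoef
      (sub_nonpos.mpr (Real.rpow_le_rpow (hu j).le (hmax j) (hα j hij)))
  rw [← mul_rpow_sub_one_sub_self_eq_sum hαβp h1 (hu i) hcu] at hsum
  nlinarith

theorem one_le_of_forall_ge {i : ι} {u : ι → ℝ} (hp : 2 < p) (ha : 0 < a i)
    (hd : ∀ j, i ≠ j → 0 ≤ d i j) (hα : ∀ j, i ≠ j → 0 ≤ α i j) (hβ : ∀ j, i ≠ j → 0 ≤ β i j)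
    (hαβp : ∀ j, i ≠ j → α i j + β i j = p) (h1 : partialEnergy p a b d α β 1 i = 0)
    (hu : ∀ j, 0 < u j) (hcu : partialEnergy p a b d α β u i = 0) (hmin : ∀ j, u i ≤ u j) :
    1 ≤ u i := by
  by_contra! hlt
  have hgt : u i ^ (p - 1) < u i := Real.rpow_lt_self_of_lt_one (hu i) hlt (by linarith)
  have hsum : 0 ≤ ∑ j ∈ univ.filter (· ≠ i),
      d i j * β i j * u i ^ (β i j - 1) * (u j ^ α i j - u i ^ α i j) := by
    refine sum_nonneg fun j hj => ?_
    have hij : i ≠ j := (mem_filter.mp hj).2.symm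
    have hcoef : 0 ≤ d i j * β i j * u i ^ (β i j - 1) :=
      mul_nonneg (mul_nonneg (hd j hij) (hβ j hij)) (Real.rpow_nonneg (hu i).le _)
    exact mul_nonneg hcoef
      (sub_nonneg.mpr (Real.rpow_le_rpow (hu i).le (hmin j) (hα j hij)))
  rw [← mul_rpow_sub_one_sub_self_eq_sum hαβp h1 (hu i) hcu] at hsum
  nlinarith

theorem eq_one_of_partialEnergy_eq_zero {u : ι → ℝ} (hp : 2 < p) (ha : ∀ i, 0 < a i)
    (hd : ∀ i j, i ≠ j → 0 ≤ d i j) (hα : ∀ i j, i ≠ j → 0 ≤ α i j)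
    (hβ : ∀ i j, i ≠ j → 0 ≤ β i j) (hαβp : ∀ i j, i ≠ j → α i j + β i j = p)
    (h1 : ∀ i, partialEnergy p a b d α β 1 i = 0) (hu : ∀ i, 0 < u i)
    (hcu : ∀ i, partialEnergy p a b d α β u i = 0) : u = 1 := by
  funext i
  have : Nonempty ι := ⟨i⟩
  obtain ⟨imax, himax⟩ := Finite.exists_max u
  obtain ⟨imin, himin⟩ := Finite.exists_min u
  have hle := le_one_of_forall_le hp (ha imax) (hd imax) (hα imax) (hβ imax) (hαβp imax)
    (h1 imax) hu (hcu imax) himax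
  have hge := one_le_of_forall_ge hp (ha imin) (hd imin) (hα imin) (hβ imin) (hαβp imin)
    (h1 imin) hu (hcu imin) himin
  exact le_antisymm ((himax i).trans hle) (hge.trans (himin i))

end CoupledEnergy

open CoupledEnergy

theorem critical_point_unique_global_max_general
    {M : ℕ} (p : ℝ) (hp : 2 < p)
    (a b : Fin M → ℝ) (d α β : Fin M → Fin M → ℝ)
    (ha : ∀ i, 0 < a i)
    (hd : ∀ i j, i ≠ j → 0 ≤ d i j)
    (hdsymm : ∀ i j, i ≠ j → d i j = d j i)
    (hα : ∀ i j, i ≠ j → 1 < α i j) (hβ : ∀ i j, i ≠ j → 1 < β i j)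
    (hαβp : ∀ i j, i ≠ j → α i j + β i j = p)
    (hsymm : ∀ i j, i ≠ j → α j i = β i j)
    (J : (Fin M → ℝ) → ℝ)
    (hJ : ∀ s : Fin M → ℝ,
      J s = ∑ i, a i * s i ^ (2 : ℝ) - ∑ i, b i * s i ^ p
        + ∑ i, ∑ j ∈ Finset.univ.filter (· ≠ i),
            d i j * s j ^ α i j * s i ^ β i j)
    -- `Crit s` expresses that all partial derivatives of `J` vanish at `s`
    (Crit : (Fin M → ℝ) → Prop)
    (hCrit : ∀ s : Fin M → ℝ, Crit s ↔ ∀ i,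
      2 * a i * s i - p * b i * s i ^ (p - 1)
        + 2 * ∑ j ∈ Finset.univ.filter (· ≠ i),
            d i j * β i j * s j ^ α i j * s i ^ (β i j - 1) = 0)
    (s : Fin M → ℝ) (hs : ∀ i, 0 < s i) (hcs : Crit s) :
    (∀ t : Fin M → ℝ, (∀ i, 0 < t i) → Crit t → t = s) ∧
    (∀ t : Fin M → ℝ, (∀ i, 0 < t i) → J t ≤ J s) := by
  set A : Fin M → ℝ := fun i => a i * s i ^ (2 : ℝ)
  set B : Fin M → ℝ := fun i => b i * s i ^ p
  set D : Fin M → Fin M → ℝ := fun i j => d i j * s j ^ α i j * s i ^ β i j with hD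
  have hα0 : ∀ i j, i ≠ j → 0 ≤ α i j := fun i j hij => zero_le_one.trans (hα i j hij).le
  have hβ0 : ∀ i j, i ≠ j → 0 ≤ β i j := fun i j hij => zero_le_one.trans (hβ i j hij).le
  have hA : ∀ i, 0 < A i := fun i => mul_pos (ha i) (Real.rpow_pos_of_pos (hs i) _)
  have hD0 : ∀ i j, i ≠ j → 0 ≤ D i j := fun i j hij => by
    have := hd i j hij; have := hs i; have := hs j; positivity
  have hDsymm : ∀ i j, i ≠ j → D i j = D j i := fun i j hij => by
    simp only [hD, hdsymm i j hij, hsymm i j hij, ← hsymm j i hij.symm, mul_right_comm]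
  have hscale : ∀ t : Fin M → ℝ, t = s * (t / s) := fun t => by
    funext i; simp [mul_div_cancel₀ _ (hs i).ne']
  have hquot : ∀ t : Fin M → ℝ, (∀ i, 0 < t i) → ∀ i, 0 < (t / s) i :=
    fun t ht i => div_pos (ht i) (hs i)
  have hCrit' : ∀ t : Fin M → ℝ, (∀ i, 0 < t i) →
      (Crit t ↔ ∀ i, partialEnergy p A B D α β (t / s) i = 0) := fun t ht => by
    rw [partialEnergy_mul_eq_zero_iff hs (fun i => (hquot t ht i).le), ← hscale t]
    exact hCrit t
  have hJ' : ∀ t : Fin M → ℝ, (∀ i, 0 < t i) → J t = energy p A B D α β (t / s) :=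
    fun t ht => by
      rw [← energy_mul (fun i => (hs i).le) (fun i => (hquot t ht i).le), ← hscale t, hJ, energy]
  have hss : s / s = 1 := funext fun i => div_self (hs i).ne'
  have h1 : ∀ i, partialEnergy p A B D α β 1 i = 0 := hss ▸ (hCrit' s hs).1 hcs
  refine ⟨fun t ht hct => ?_, fun t ht => ?_⟩
  · have := eq_one_of_partialEnergy_eq_zero hp hA hD0 hα0 hβ0 hαβp h1 (hquot t ht)
      ((hCrit' t ht).1 hct)
    rw [hscale t, this, mul_one]
  · rw [hJ' t ht, hJ' s hs, hss]
    exact energy_le_energy_one hp (fun i => (hA i).le) hD0 hDsymm hα0 hβ0 hαβp hsymm h1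
      (fun i => (hquot t ht i).le)

/-- If `J` has a critical point in `(0,∞)^M`, it is unique and a global maximum. -/
theorem critical_point_unique_global_max
    {M : ℕ} (hM : 1 ≤ M) (p : ℝ) (hp : 2 < p)
    (a b : Fin M → ℝ) (d α β : Fin M → Fin M → ℝ)
    (ha : ∀ i, 0 < a i) (hb : ∀ i, 0 < b i)
    (hd : ∀ i j, i ≠ j → 0 ≤ d i j)
    (hdsymm : ∀ i j, i ≠ j → d i j = d j i)
    (hα : ∀ i j, i ≠ j → 1 < α i j) (hβ : ∀ i j, i ≠ j → 1 < β i j)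
    (hαβp : ∀ i j, i ≠ j → α i j + β i j = p)
    (hsymm : ∀ i j, i ≠ j → α j i = β i j)
    (J : (Fin M → ℝ) → ℝ)
    (hJ : ∀ s : Fin M → ℝ,
      J s = ∑ i, a i * s i ^ (2 : ℝ) - ∑ i, b i * s i ^ p
        + ∑ i, ∑ j ∈ Finset.univ.filter (· ≠ i),
            d i j * s j ^ α i j * s i ^ β i j)
    -- `Crit s` expresses that all partial derivatives of `J` vanish at `s`
    (Crit : (Fin M → ℝ) → Prop)
    (hCrit : ∀ s : Fin M → ℝ, Crit s ↔ ∀ i,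
      2 * a i * s i - p * b i * s i ^ (p - 1)
        + 2 * ∑ j ∈ Finset.univ.filter (· ≠ i),
            d i j * β i j * s j ^ α i j * s i ^ (β i j - 1) = 0)
    (s : Fin M → ℝ) (hs : ∀ i, 0 < s i) (hcs : Crit s) :
    (∀ t : Fin M → ℝ, (∀ i, 0 < t i) → Crit t → t = s) ∧
    (∀ t : Fin M → ℝ, (∀ i, 0 < t i) → J t ≤ J s) :=
  critical_point_unique_global_max_general p hp a b d α β ha hd hdsymm hα hβ hαβp hsymm J hJ Crit
    hCrit s hs hcs
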